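/- arXiv:1804.09952 — 4 statements merged into one kernel-verified Lean document; each statement's English description precedes it below -/
import Mathlib

section
/- If X ⊂ R^d is a finite set and x lies on the relative boundary of Conv X, then Σ_{∅ ≠ S ⊆ X} (-1)^{|S|-1} [Conv S](x) = 0. -/
open scoped Classical

/-- The `ℤ`-valued indicator function of a set. -/
noncomputable def indZ {α : Type*} (A : Set α) (x : α) : ℤ := if x ∈ A then 1 else 0

private lemma exists_support {d : ℕ} (X : Finset (Fin d → ℝ)) (x : Fin d → ℝ)
    (hxc : x ∈ convexHull ℝ (X : Set (Fin d → ℝ)))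
    (hxi : x ∉ intrinsicInterior ℝ (convexHull ℝ (X : Set (Fin d → ℝ)))) :
    ∃ F : (Fin d → ℝ) →ₗ[ℝ] ℝ,
      (∀ y ∈ convexHull ℝ (X : Set (Fin d → ℝ)), F y ≤ F x) ∧
      (∃ y ∈ X, F y < F x) := by
  set C : Set (Fin d → ℝ) := convexHull ℝ (X : Set (Fin d → ℝ)) with hC
  have hCconv : Convex ℝ C := convex_convexHull _ _
  have hxV : x ∈ affineSpan ℝ C := subset_affineSpan ℝ C hxc
  set D := (affineSpan ℝ C).direction with hD
  have memD : ∀ q : affineSpan ℝ C, (q : Fin d → ℝ) - x ∈ D := fun q =>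
    AffineSubspace.vsub_mem_direction q.2 hxV
  have memV : ∀ v : D, x + (v : Fin d → ℝ) ∈ affineSpan ℝ C := fun v => by
    have := AffineSubspace.vadd_mem_of_mem_direction v.2 hxV
    simpa [add_comm] using this
  let h : D ≃ₜ affineSpan ℝ C :=
  { toFun := fun v => ⟨x + v, memV v⟩
    invFun := fun q => ⟨(q : Fin d → ℝ) - x, memD q⟩
    left_inv := fun v => by ext; simp
    right_inv := fun q => by ext; simp
    continuous_toFun := Continuous.subtype_mk (continuous_const.add continuous_subtype_val) _
    continuous_invFun := Continuous.subtype_mk (continuous_subtype_val.sub continuous_const) _ }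
  set s : Set D := (fun v : D => x + (v : Fin d → ℝ)) ⁻¹' C with hs
  have hsconv : Convex ℝ s := by
    intro u hu v hv a b ha hb hab
    have e1 : a • (x + (u : Fin d → ℝ)) + b • (x + (v : Fin d → ℝ))
        = (a + b) • x + (a • (u : Fin d → ℝ) + b • (v : Fin d → ℝ)) := by module
    have hmem := hCconv hu hv ha hb hab
    rw [e1, hab, one_smul] at hmem
    show x + ((a • u + b • v : D) : Fin d → ℝ) ∈ C
    simpa using hmem
  have hsu : s = h ⁻¹' (Subtype.val ⁻¹' C : Set (affineSpan ℝ C)) := rfl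
  have hint : interior s = h ⁻¹' interior (Subtype.val ⁻¹' C : Set (affineSpan ℝ C)) := by
    rw [hsu, h.preimage_interior]
  have h0 : (0 : D) ∉ interior s := by
    intro hmem
    apply hxi
    rw [mem_intrinsicInterior]
    refine ⟨h 0, ?_, by simp [h]⟩
    rw [hint] at hmem; exact hmem
  obtain ⟨w, hw⟩ := Set.Nonempty.intrinsicInterior hCconv ⟨x, hxc⟩
  rw [mem_intrinsicInterior] at hw
  obtain ⟨q, hq, hqw⟩ := hw
  have hv₀int : h.symm q ∈ interior s := by
    rw [hint, Set.mem_preimage, h.apply_symm_apply]; exact hq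
  set v₀ := h.symm q with hv₀
  obtain ⟨f, hf⟩ := geometric_hahn_banach_open_point (hsconv.interior) isOpen_interior h0
  simp only [map_zero] at hf
  have hfv₀ : f v₀ < 0 := hf v₀ hv₀int
  have hfle : ∀ a ∈ s, f a ≤ 0 := by
    intro a ha
    by_contra hpos
    push_neg at hpos
    have hne : (0:ℝ) < f a - f v₀ := by linarith
    set t : ℝ := f a / (f a - f v₀) with ht
    have ht0 : 0 < t := div_pos hpos hne
    have ht1 : t ≤ 1 := by rw [div_le_one hne]; linarith
    have hcombo : (1 - t) • a + t • v₀ ∈ interior s :=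
      hsconv.combo_self_interior_mem_interior ha hv₀int (by linarith) ht0 (by ring)
    have := hf _ hcombo
    rw [map_add, map_smul, map_smul, smul_eq_mul, smul_eq_mul] at this
    have hmul : t * (f a - f v₀) = f a := div_mul_cancel₀ _ (ne_of_gt hne)
    nlinarith
  obtain ⟨F, hF⟩ := LinearMap.exists_extend (f : D →ₗ[ℝ] ℝ)
  have hFv : ∀ v : D, F (v : Fin d → ℝ) = f v := fun v => by
    have := congrArg (fun g => g v) hF
    simpa using this
  have hmain : ∀ y ∈ C, F y ≤ F x := by
    intro y hy
    have hyV : y ∈ affineSpan ℝ C := subset_affineSpan ℝ C hy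
    have hmemd : y - x ∈ D := AffineSubspace.vsub_mem_direction hyV hxV
    have hsy : (⟨y - x, hmemd⟩ : D) ∈ s := by
      show x + (y - x) ∈ C; simpa using hy
    have := hfle _ hsy
    rw [← hFv ⟨y - x, hmemd⟩] at this
    simp only [map_sub] at this
    linarith
  refine ⟨F, hmain, ?_⟩
  by_contra hcon
  push_neg at hcon
  have hconst : ∀ y ∈ X, F y = F x := fun y hy =>
    le_antisymm (hmain y (subset_convexHull ℝ _ hy)) (hcon y hy)
  have hsub : C ⊆ {z | F z = F x} := by
    rw [hC]
    exact convexHull_min (fun y hy => hconst y hy) (convex_hyperplane F.isLinear _)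
  have hv₀s : v₀ ∈ s := interior_subset hv₀int
  have hws : x + (v₀ : Fin d → ℝ) ∈ C := hv₀s
  have := hsub hws
  have hFw : F (x + (v₀ : Fin d → ℝ)) = F x + f v₀ := by
    rw [map_add, hFv]
  rw [Set.mem_setOf_eq, hFw] at this
  linarith

/-- If `X ⊂ ℝ^d` is finite and `x` lies on the relative boundary of `Conv X`
(the closure minus the relative interior), then
`Σ_{∅ ≠ S ⊆ X} (-1)^{|S|-1} [Conv S](x) = 0`. -/
theorem boundary_alternating_sum {d : ℕ} (X : Finset (Fin d → ℝ)) (hX : X.Nonempty)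
    (x : Fin d → ℝ)
    (hx : x ∈ closure (convexHull ℝ (X : Set (Fin d → ℝ))) \
      intrinsicInterior ℝ (convexHull ℝ (X : Set (Fin d → ℝ)))) :
    ∑ S ∈ X.powerset.filter (· ≠ ∅),
        (-1 : ℤ) ^ (S.card - 1) * indZ (convexHull ℝ (S : Set (Fin d → ℝ))) x = 0 := by
  classical
  have hxc : x ∈ convexHull ℝ (X : Set (Fin d → ℝ)) := by
    have := hx.1
    rwa [(X.finite_toSet.isClosed_convexHull (𝕜 := ℝ)).closure_eq] at this
  obtain ⟨F, hle, y₁, hy₁X, hy₁⟩ := exists_support X x hxc hx.2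
  set X0 := X.filter (fun y => F y = F x) with hX0
  set X1 := X.filter (fun y => ¬ F y = F x) with hX1
  have hy1X1 : y₁ ∈ X1 := Finset.mem_filter.2 ⟨hy₁X, by intro h; rw [h] at hy₁; exact lt_irrefl _ hy₁⟩
  -- key: indicator only depends on S ∩ X0
  have key : ∀ S ∈ X.powerset,
      indZ (convexHull ℝ (S : Set (Fin d → ℝ))) x
        = indZ (convexHull ℝ ((S ∩ X0 : Finset _) : Set (Fin d → ℝ))) x := by
    intro S hS
    rw [Finset.mem_powerset] at hS
    unfold indZ
    congr 1
    apply propext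
    constructor
    · intro hmem
      rw [Finset.mem_convexHull'] at hmem
      obtain ⟨w, hw0, hw1, hwsum⟩ := hmem
      have hFsum : ∑ y ∈ S, w y * F y = F x := by
        have := congrArg F hwsum
        rw [map_sum] at this
        simpa [map_smul, smul_eq_mul] using this
      have hzero : ∀ y ∈ S, w y * (F x - F y) = 0 := by
        have hsum0 : ∑ y ∈ S, w y * (F x - F y) = 0 := by
          have : ∑ y ∈ S, w y * (F x - F y)
              = (∑ y ∈ S, w y) * F x - ∑ y ∈ S, w y * F y := by
            rw [Finset.sum_mul, ← Finset.sum_sub_distrib]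
            exact Finset.sum_congr rfl (fun y _ => by ring)
          rw [this, hw1, hFsum]; ring
        intro y hy
        refine (Finset.sum_eq_zero_iff_of_nonneg ?_).1 hsum0 y hy
        intro z hz
        have hzle : F z ≤ F x := hle z (subset_convexHull ℝ _ (hS hz))
        exact mul_nonneg (hw0 z hz) (by linarith)
      have hw0' : ∀ y ∈ S, y ∉ S ∩ X0 → w y = 0 := by
        intro y hy hyn
        have hyX0 : y ∉ X0 := fun h => hyn (Finset.mem_inter.2 ⟨hy, h⟩)
        have hFy : ¬ F y = F x := by
          intro h
          exact hyX0 (Finset.mem_filter.2 ⟨hS hy, h⟩)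
        have hlt : F x - F y ≠ 0 := by
          intro h
          exact hFy (by linarith [sub_eq_zero.1 h])
        have := hzero y hy
        rcases mul_eq_zero.1 this with h | h
        · exact h
        · exact absurd h hlt
      rw [Finset.mem_convexHull']
      refine ⟨w, fun y hy => hw0 y (Finset.mem_of_mem_inter_left hy), ?_, ?_⟩
      · rw [Finset.sum_subset (Finset.inter_subset_left) (fun y hy hyn => hw0' y hy hyn)]
        exact hw1
      · rw [Finset.sum_subset (Finset.inter_subset_left)
          (fun y hy hyn => by rw [hw0' y hy hyn, zero_smul])]
        exact hwsum
    · intro hmem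
      exact convexHull_mono (by exact_mod_cast Finset.inter_subset_left) hmem
  -- the empty set contributes 0, so drop the filter
  have hempty : (-1 : ℤ) ^ ((∅ : Finset (Fin d → ℝ)).card - 1)
      * indZ (convexHull ℝ ((∅ : Finset (Fin d → ℝ)) : Set (Fin d → ℝ))) x = 0 := by
    simp [indZ]
  have hfe : X.powerset.filter (· ≠ ∅) = X.powerset.erase ∅ := by
    ext S
    simp [Finset.mem_filter, Finset.mem_erase, and_comm]
  rw [hfe, Finset.sum_erase
    (f := fun S : Finset (Fin d → ℝ) =>
      (-1 : ℤ) ^ (S.card - 1) * indZ (convexHull ℝ (S : Set (Fin d → ℝ))) x)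
    X.powerset hempty]
  -- rewrite each summand using key
  rw [Finset.sum_congr rfl (fun S hS => by rw [key S hS])]
  -- reindex by pairs (T, R) with T ⊆ X0, R ⊆ X1
  have hdisj : Disjoint X0 X1 := Finset.disjoint_filter_filter_not X X (fun y => F y = F x)
  have hunion : X0 ∪ X1 = X := Finset.filter_union_filter_not_eq _ X
  rw [Finset.sum_nbij' (i := fun S => (S ∩ X0, S ∩ X1))
    (j := fun p => p.1 ∪ p.2)
    (t := X0.powerset ×ˢ X1.powerset)
    (g := fun p => (-1 : ℤ) ^ ((p.1 ∪ p.2).card - 1)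
      * indZ (convexHull ℝ ((p.1 : Finset (Fin d → ℝ)) : Set (Fin d → ℝ))) x)
    (hi := fun S hS => by
      rw [Finset.mem_product]
      exact ⟨Finset.mem_powerset.2 Finset.inter_subset_right,
        Finset.mem_powerset.2 Finset.inter_subset_right⟩)
    (hj := fun p hp => by
      rw [Finset.mem_product] at hp
      rw [Finset.mem_powerset]
      refine Finset.union_subset ?_ ?_
      · exact (Finset.mem_powerset.1 hp.1).trans (Finset.filter_subset _ X)
      · exact (Finset.mem_powerset.1 hp.2).trans (Finset.filter_subset _ X))
    (left_neg := fun S hS => by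
      rw [Finset.mem_powerset] at hS
      show S ∩ X0 ∪ S ∩ X1 = S
      rw [← Finset.inter_union_distrib_left, hunion]
      exact Finset.inter_eq_left.2 hS)
    (right_neg := fun p hp => by
      rw [Finset.mem_product] at hp
      have h1 : p.1 ⊆ X0 := Finset.mem_powerset.1 hp.1
      have h2 : p.2 ⊆ X1 := Finset.mem_powerset.1 hp.2
      have hd2 : p.2 ∩ X0 = ∅ := by
        rw [← Finset.disjoint_iff_inter_eq_empty]
        exact Finset.disjoint_of_subset_left h2 hdisj.symm
      have hd1 : p.1 ∩ X1 = ∅ := by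
        rw [← Finset.disjoint_iff_inter_eq_empty]
        exact Finset.disjoint_of_subset_left h1 hdisj
      have e1 : (p.1 ∪ p.2) ∩ X0 = p.1 := by
        rw [Finset.union_inter_distrib_right, Finset.inter_eq_left.2 h1, hd2,
          Finset.union_empty]
      have e2 : (p.1 ∪ p.2) ∩ X1 = p.2 := by
        rw [Finset.union_inter_distrib_right, Finset.inter_eq_left.2 h2, hd1,
          Finset.empty_union]
      show ((p.1 ∪ p.2) ∩ X0, (p.1 ∪ p.2) ∩ X1) = p
      rw [e1, e2])
    (h := fun S hS => by
      rw [Finset.mem_powerset] at hS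
      have huni : S ∩ X0 ∪ S ∩ X1 = S := by
        rw [← Finset.inter_union_distrib_left, hunion]
        exact Finset.inter_eq_left.2 hS
      show (-1 : ℤ) ^ (S.card - 1) * indZ (convexHull ℝ ((S ∩ X0 : Finset _) : Set (Fin d → ℝ))) x
        = (-1 : ℤ) ^ ((S ∩ X0 ∪ S ∩ X1).card - 1)
            * indZ (convexHull ℝ ((S ∩ X0 : Finset _) : Set (Fin d → ℝ))) x
      rw [huni])]
  rw [Finset.sum_product]
  apply Finset.sum_eq_zero
  intro T hT
  by_cases hTe : T = ∅
  · subst hTe; simp [indZ]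
  · have hT1 : 1 ≤ T.card := Finset.card_pos.2 (Finset.nonempty_of_ne_empty hTe)
    have hTX0 : T ⊆ X0 := Finset.mem_powerset.1 hT
    have step : ∀ R ∈ X1.powerset,
        (-1 : ℤ) ^ ((T ∪ R).card - 1) * indZ (convexHull ℝ (T : Set (Fin d → ℝ))) x
          = ((-1 : ℤ) ^ (T.card - 1) * indZ (convexHull ℝ (T : Set (Fin d → ℝ))) x)
            * (-1 : ℤ) ^ R.card := by
      intro R hR
      have hdTR : Disjoint T R :=
        Finset.disjoint_of_subset_left hTX0
          (Finset.disjoint_of_subset_right (Finset.mem_powerset.1 hR) hdisj)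
      rw [Finset.card_union_of_disjoint hdTR,
        show T.card + R.card - 1 = (T.card - 1) + R.card by omega, pow_add]
      ring
    rw [Finset.sum_congr rfl step, ← Finset.mul_sum,
      Finset.sum_powerset_neg_one_pow_card_of_nonempty ⟨y₁, hy1X1⟩, mul_zero]
end

section
/- Let G be a connected bipartite graph with color classes E and V. Then the root polytope Q_G has dimension |E| + |V| - 2. -/
/-!
Let `W` be the vector span of the vertices `𝐞 + 𝐯` of `Q_G`. Every vertex has coordinate sum `1`
on `E` and on `V`, so `W` lies in the kernel of the map `f ↦ (Σₑ f 𝐞, Σᵥ f 𝐯)`, a subspace of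
codimension `2`. Conversely, fix an edge `e₀v₀`. For every edge `ev`,
`(𝐞 + 𝐯) - (𝐞₀ + 𝐯₀) = (𝐞 - 𝐞₀) + (𝐯 - 𝐯₀) ∈ W`, so `𝐞 - 𝐞₀ ∈ W` iff `𝐯 - 𝐯₀ ∈ W`; by
connectedness all these differences lie in `W`, and they span the kernel.
-/

open scoped Classical Pointwise

/-- The root polytope of a bipartite graph with color classes `E` and `V` and edge set `A`:
the convex hull of the points `𝐞 + 𝐯` in `ℝ^E ⊕ ℝ^V` over the edges `ev ∈ A`. -/
noncomputable def rootPolytope {E V : Type*} (A : Finset (E × V)) : Set ((E ⊕ V) → ℝ) :=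
  convexHull ℝ
    ((fun p : E × V => Pi.single (Sum.inl p.1) (1 : ℝ) + Pi.single (Sum.inr p.2) (1 : ℝ)) ''
      (A : Set (E × V)))

/-- The number of lattice points in a subset of `ℝ^ι`. -/
noncomputable def latticeCount {ι : Type*} (A : Set (ι → ℝ)) : ℕ :=
  Set.ncard {f ∈ A | ∀ i, ∃ z : ℤ, f i = (z : ℝ)}

/-- The Ehrhart series of the root polytope of the bipartite graph with edge set `A`,
as a formal power series: `1 + Σ_{s ≥ 1} |s·Q_A ∩ ℤ^{E⊔V}| xˢ`. -/
noncomputable def ehr {E V : Type*} (A : Finset (E × V)) : PowerSeries ℝ :=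
  PowerSeries.mk fun s => if s = 0 then 1 else (latticeCount ((s : ℝ) • rootPolytope A) : ℝ)

/-- The bipartite graph on vertex set `E ⊕ V` with edge set `A ⊆ E × V`. -/
def bipGraph {E V : Type*} (A : Finset (E × V)) : SimpleGraph (E ⊕ V) :=
  SimpleGraph.fromRel fun x y => ∃ p ∈ A, x = Sum.inl p.1 ∧ y = Sum.inr p.2

open Function Module

theorem SimpleGraph.Connected.forall_of_adj_imp {α : Type*} {G : SimpleGraph α}
    (hG : G.Connected) {P : α → Prop} (hP : ∀ x y, G.Adj x y → P x → P y)
    {a : α} (ha : P a) (x : α) : P x := by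
  obtain ⟨w⟩ := hG a x
  induction w with
  | nil => exact ha
  | cons hadj _ ih => exact ih (hP _ _ hadj ha)

theorem vectorSpan_le_ker_of_forall_eq {R M N : Type*} [Ring R] [AddCommGroup M] [Module R M]
    [AddCommGroup N] [Module R N] {s : Set M} (φ : M →ₗ[R] N) {c : N} (h : ∀ x ∈ s, φ x = c) :
    vectorSpan R s ≤ LinearMap.ker φ := by
  rw [vectorSpan_def, Submodule.span_le]
  rintro _ ⟨x, hx, y, hy, rfl⟩
  simp [h x hx, h y hy]

theorem Submodule.sum_smul_mem_of_sum_eq_zero {R M ι : Type*} [Ring R] [AddCommGroup M]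
    [Module R M] (W : Submodule R M) (s : Finset ι) {c : ι → R} {b : ι → M} (b₀ : M)
    (hb : ∀ i ∈ s, b i - b₀ ∈ W) (hc : ∑ i ∈ s, c i = 0) : ∑ i ∈ s, c i • b i ∈ W := by
  have hsum : ∑ i ∈ s, c i • b i = ∑ i ∈ s, c i • (b i - b₀) := by
    simp only [smul_sub, Finset.sum_sub_distrib, ← Finset.sum_smul, hc, zero_smul, sub_zero]
  rw [hsum]
  exact W.sum_smul_mem c hb

theorem bipGraph_empty {E V : Type*} : bipGraph (∅ : Finset (E × V)) = ⊥ := by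
  ext x y
  simp [bipGraph]

theorem rootPolytope_empty {E V : Type*} : rootPolytope (∅ : Finset (E × V)) = ∅ := by
  simp [rootPolytope]

noncomputable def edgePoint {E V : Type*} (p : E × V) : (E ⊕ V) → ℝ :=
  Pi.single (Sum.inl p.1) 1 + Pi.single (Sum.inr p.2) 1

theorem rootPolytope_eq_convexHull {E V : Type*} (ℰ : Finset (E × V)) :
    rootPolytope ℰ = convexHull ℝ (edgePoint '' ℰ) :=
  rfl

theorem edgePoint_sub_edgePoint {E V : Type*} (p q : E × V) :
    edgePoint p - edgePoint q = (Pi.single (Sum.inl p.1) 1 - Pi.single (Sum.inl q.1) 1)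
      + (Pi.single (Sum.inr p.2) 1 - Pi.single (Sum.inr q.2) 1) := by
  simp only [edgePoint]
  abel

section colorSums

variable {E V : Type*} [Fintype E] [Fintype V]

variable (E V) in
noncomputable def colorSums : ((E ⊕ V) → ℝ) →ₗ[ℝ] ℝ × ℝ where
  toFun f := (∑ e, f (Sum.inl e), ∑ v, f (Sum.inr v))
  map_add' f g := by simp [Finset.sum_add_distrib]
  map_smul' c f := by simp [Finset.mul_sum]

@[simp]
theorem colorSums_apply (f : (E ⊕ V) → ℝ) :
    colorSums E V f = (∑ e, f (Sum.inl e), ∑ v, f (Sum.inr v)) :=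
  rfl

theorem colorSums_edgePoint (p : E × V) : colorSums E V (edgePoint p) = (1, 1) := by
  simp [edgePoint, Pi.single_apply]

theorem colorSums_surjective [Nonempty E] [Nonempty V] : Surjective (colorSums E V) := by
  rintro ⟨a, b⟩
  obtain ⟨e₀⟩ := ‹Nonempty E›
  obtain ⟨v₀⟩ := ‹Nonempty V›
  exact ⟨Pi.single (Sum.inl e₀) a + Pi.single (Sum.inr v₀) b, by simp [Pi.single_apply]⟩

theorem finrank_ker_colorSums [Nonempty E] [Nonempty V] :
    finrank ℝ (LinearMap.ker (colorSums E V)) = Fintype.card E + Fintype.card V - 2 := by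
  have hrank := LinearMap.finrank_range_add_finrank_ker (colorSums E V)
  rw [LinearMap.range_eq_top.2 colorSums_surjective, finrank_top, finrank_prod, finrank_self,
    finrank_pi, Fintype.card_sum] at hrank
  omega

theorem ker_colorSums_le {W : Submodule ℝ ((E ⊕ V) → ℝ)} (e₀ : E) (v₀ : V)
    (hE : ∀ e, Pi.single (Sum.inl e) 1 - Pi.single (Sum.inl e₀) 1 ∈ W)
    (hV : ∀ v, Pi.single (Sum.inr v) 1 - Pi.single (Sum.inr v₀) 1 ∈ W) :
    LinearMap.ker (colorSums E V) ≤ W := by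
  intro f hf
  simp only [LinearMap.mem_ker, colorSums_apply, Prod.mk_eq_zero] at hf
  have hdecomp : f = ∑ e, f (Sum.inl e) • Pi.single (Sum.inl e) 1
      + ∑ v, f (Sum.inr v) • Pi.single (Sum.inr v) 1 := by
    simp only [← Pi.single_smul', smul_eq_mul, mul_one]
    rw [← Fintype.sum_sum_type (fun x => Pi.single x (f x)), Finset.univ_sum_single]
  rw [hdecomp]
  exact W.add_mem (W.sum_smul_mem_of_sum_eq_zero _ _ (fun e _ => hE e) hf.1)
    (W.sum_smul_mem_of_sum_eq_zero _ _ (fun v _ => hV v) hf.2)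

variable {ℰ : Finset (E × V)}

theorem vectorSpan_rootPolytope (hconn : (bipGraph ℰ).Connected) {e₀ : E} {v₀ : V}
    (h₀ : (e₀, v₀) ∈ ℰ) : vectorSpan ℝ (rootPolytope ℰ) = LinearMap.ker (colorSums E V) := by
  rw [rootPolytope_eq_convexHull ℰ, ← direction_affineSpan, affineSpan_convexHull,
    direction_affineSpan]
  set W := vectorSpan ℝ (edgePoint '' (ℰ : Set (E × V)))
  refine le_antisymm
    (vectorSpan_le_ker_of_forall_eq _ (by rintro _ ⟨p, -, rfl⟩; exact colorSums_edgePoint p)) ?_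
  let P : E ⊕ V → Prop := Sum.elim
    (fun e => Pi.single (Sum.inl e) 1 - Pi.single (Sum.inl e₀) 1 ∈ W)
    (fun v => Pi.single (Sum.inr v) 1 - Pi.single (Sum.inr v₀) 1 ∈ W)
  have hedge : ∀ p ∈ ℰ, P (Sum.inl p.1) ↔ P (Sum.inr p.2) := by
    intro p hp
    have hmem : edgePoint p - edgePoint (e₀, v₀) ∈ W :=
      vsub_mem_vectorSpan ℝ ⟨p, hp, rfl⟩ ⟨_, h₀, rfl⟩
    rw [edgePoint_sub_edgePoint] at hmem
    constructor
    · exact fun h => (W.add_mem_iff_right h).1 hmem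
    · exact fun h => (W.add_mem_iff_left h).1 hmem
  have hP : ∀ x, P x := by
    refine hconn.forall_of_adj_imp ?_ (a := Sum.inl e₀) (by simp [P])
    rintro x y ⟨-, ⟨p, hp, rfl, rfl⟩ | ⟨p, hp, rfl, rfl⟩⟩
    · exact (hedge p hp).1
    · exact (hedge p hp).2
  exact ker_colorSums_le e₀ v₀ (fun e => hP (Sum.inl e)) (fun v => hP (Sum.inr v))

end colorSums

/-- For a connected bipartite graph `G` with color classes `E` and `V`, the root polytope
`Q_G` has dimension `|E| + |V| - 2`. -/
theorem rootPolytope_dim {E V : Type*} [Fintype E] [Fintype V]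
    (ℰ : Finset (E × V)) (hconn : (bipGraph ℰ).Connected) :
    Module.finrank ℝ (vectorSpan ℝ (rootPolytope ℰ)) =
      Fintype.card E + Fintype.card V - 2 := by
  rcases ℰ.eq_empty_or_nonempty with rfl | ⟨⟨e₀, v₀⟩, h₀⟩
  · -- no edges: a single vertex, and the truncated `1 - 2` is `0`
    obtain ⟨hsub, -⟩ := SimpleGraph.connected_bot_iff.1 (bipGraph_empty ▸ hconn)
    have hcard := Fintype.card_le_one_iff_subsingleton.2 hsub
    rw [Fintype.card_sum] at hcard
    rw [rootPolytope_empty, vectorSpan_empty, finrank_bot]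
    omega
  · have : Nonempty E := ⟨e₀⟩
    have : Nonempty V := ⟨v₀⟩
    rw [vectorSpan_rootPolytope hconn h₀, finrank_ker_colorSums]
end

section
/- Let X = {x_0, ..., x_n} ⊂ R^d be affinely dependent with convex hull of dimension m. Then there exist real numbers ε_0, ..., ε_n such that the lifted set Y = {(x_i, ε_i)} ⊂ R^{d+1} satisfies dim(Conv Y) = m + 1. -/
/-!
Take an affine dependence `∑ f x • x = 0`, `∑ f x = 0` of `X` with `f p ≠ 0`, and lift `p` to height
`1` and every other point to height `0`. The same weights applied to the lifted points give the
vertical vector `(0, f p)`, which therefore lies in the direction of the lifted set. Once the vertical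
line is in that direction, so is every `(v, 0)` with `v` in the direction of `X`, hence the direction
of the lifted set is the direction of `X` times the line, of dimension `m + 1`.
-/

open Module

namespace Submodule

variable {R M N : Type*} [Semiring R] [AddCommMonoid M] [Module R M] [AddCommMonoid N] [Module R N]

def prodEquiv (p : Submodule R M) (q : Submodule R N) : p.prod q ≃ₗ[R] p × q where
  toFun x := (⟨x.1.1, x.2.1⟩, ⟨x.1.2, x.2.2⟩)
  invFun y := ⟨(y.1, y.2), y.1.2, y.2.2⟩
  map_add' _ _ := rfl
  map_smul' _ _ := rfl

theorem finrank_prod_top {K V : Type*} [DivisionRing K] [AddCommGroup V] [Module K V]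
    (W : Submodule K V) [Module.Finite K W] :
    finrank K (W.prod (⊤ : Submodule K K)) = finrank K W + 1 := by
  rw [(W.prodEquiv ⊤).finrank_eq, finrank_prod, finrank_top, finrank_self]

end Submodule

section Lift

variable {k V : Type*} [Ring k] [AddCommGroup V] [Module k V]

theorem vectorSpan_image_graph_eq_prod_top {s : Set V} {ε : V → k}
    (h : ((0 : V), (1 : k)) ∈ vectorSpan k ((fun q => (q, ε q)) '' s)) :
    vectorSpan k ((fun q => (q, ε q)) '' s) = (vectorSpan k s).prod ⊤ := by
  apply le_antisymm
  · rw [vectorSpan_def, Submodule.span_le]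
    rintro _ ⟨_, ⟨a, ha, rfl⟩, _, ⟨b, hb, rfl⟩, rfl⟩
    exact ⟨vsub_mem_vectorSpan k ha hb, trivial⟩
  set Y := vectorSpan k ((fun q => (q, ε q)) '' s)
  have hvert (t : k) : ((0 : V), t) ∈ Y := by simpa using Y.smul_mem t h
  have hhor : vectorSpan k s ≤ Y.comap (LinearMap.inl k V k) := by
    rw [vectorSpan_def, Submodule.span_le]
    rintro _ ⟨a, ha, b, hb, rfl⟩
    have hab := vsub_mem_vectorSpan k (Set.mem_image_of_mem (fun q => (q, ε q)) ha)
      (Set.mem_image_of_mem (fun q => (q, ε q)) hb)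
    simpa using Y.sub_mem hab (hvert (ε a - ε b))
  rintro ⟨v, t⟩ ⟨hv, -⟩
  simpa using Y.add_mem (hhor hv) (hvert t)

theorem mem_vectorSpan_image_graph_of_sum_eq_zero {s : Finset V} {w : V → k} (ε : V → k)
    (hw : ∑ x ∈ s, w x = 0) (hwx : ∑ x ∈ s, w x • x = 0) :
    ((0 : V), ∑ x ∈ s, w x * ε x) ∈ vectorSpan k ((fun q => (q, ε q)) '' (s : Set V)) := by
  have hw' : ∑ x : s, w x = 0 := by rwa [Finset.sum_coe_sort s w]
  have hmem := weightedVSub_mem_vectorSpan hw' (fun x : s => ((x : V), ε x))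
  have hsum : ∑ x : s, w x • ((x : V), ε x) = ((0 : V), ∑ x ∈ s, w x * ε x) := by
    ext
    · simp [Prod.fst_sum, Finset.sum_attach s (fun x => w x • x), hwx]
    · simp [Prod.snd_sum, Finset.sum_attach s (fun x => w x * ε x)]
  rw [Finset.weightedVSub_eq_linear_combination _ hw', hsum] at hmem
  convert hmem using 2
  ext
  simp

end Lift

/-- Let `X ⊂ ℝ^d` be a finite affinely dependent set whose convex hull has dimension `m`.
Then there exists a lift `q ↦ (q, ε q)` of the points of `X` to `ℝ^{d+1}` such that the
convex hull of the lifted set has dimension `m + 1`. -/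
theorem exists_lift_dim_succ {d m : ℕ} (X : Finset (Fin d → ℝ))
    (hdep : ¬ AffineIndependent ℝ (Subtype.val : {y // y ∈ X} → (Fin d → ℝ)))
    (hm : Module.finrank ℝ (vectorSpan ℝ (X : Set (Fin d → ℝ))) = m) :
    ∃ ε : (Fin d → ℝ) → ℝ,
      Module.finrank ℝ
          (vectorSpan ℝ ((fun q => (q, ε q)) '' (X : Set (Fin d → ℝ)))) = m + 1 := by
  obtain ⟨f, hfx, hf, p, hpX, hfp⟩ := exists_nontrivial_relation_sum_zero_of_not_affine_ind hdep
  let ε : (Fin d → ℝ) → ℝ := fun x => if x = p then 1 else 0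
  have hvert : ((0 : Fin d → ℝ), f p) ∈ vectorSpan ℝ ((fun q => (q, ε q)) '' (X : Set _)) := by
    simpa [ε, hpX] using mem_vectorSpan_image_graph_of_sum_eq_zero ε hf hfx
  have hunit := Submodule.smul_mem _ (f p)⁻¹ hvert
  rw [Prod.smul_mk, smul_zero, smul_eq_mul, inv_mul_cancel₀ hfp] at hunit
  refine ⟨ε, ?_⟩
  rw [vectorSpan_image_graph_eq_prod_top hunit, Submodule.finrank_prod_top, hm]
end

section
/- Let G be a connected bipartite graph and let G̃ be obtained from G by adding one new vertex joined by a single edge to one existing vertex (of the opposite color class). Then the root polytopes satisfy Ehr_{Q_{G̃}}(x) = Ehr_{Q_G}(x) / (1-x), and consequently the interior polynomials are equal: I_{G̃}(x) = I_G(x). -/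
open scoped Classical Pointwise

namespace PendantAux

noncomputable def vm {E V : Type*} (p : E × V) : (E ⊕ V) → ℝ :=
  Pi.single (Sum.inl p.1) (1 : ℝ) + Pi.single (Sum.inr p.2) (1 : ℝ)

lemma rootPolytope_eq_vm {E V : Type*} (A : Finset (E × V)) :
    rootPolytope A = convexHull ℝ (vm '' (A : Set (E × V))) := rfl

lemma vm_apply {E V : Type*} (p : E × V) (i : E ⊕ V) :
    vm p i = (if i = Sum.inl p.1 then (1:ℝ) else 0) + (if i = Sum.inr p.2 then (1:ℝ) else 0) := by
  simp [vm, Pi.single_apply]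

lemma vm_injective {E V : Type*} : Function.Injective (vm (E := E) (V := V)) := by
  intro p q h
  have h1 := congrFun h (Sum.inl p.1)
  have h2 := congrFun h (Sum.inr p.2)
  have e1 : p.1 = q.1 := by
    by_contra hne
    simp [vm_apply, hne] at h1
  have e2 : p.2 = q.2 := by
    by_contra hne
    simp [vm_apply, hne] at h2
  exact Prod.ext e1 e2

lemma vm_mem_Icc {E V : Type*} (p : E × V) (i : E ⊕ V) : vm p i ∈ Set.Icc (0:ℝ) 1 := by
  rw [vm_apply]
  rcases i with e | v <;> split_ifs <;> simp_all <;> norm_num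

lemma mem_Icc_of_mem_root {E V : Type*} (A : Finset (E × V)) {y : (E ⊕ V) → ℝ}
    (hy : y ∈ rootPolytope A) (i : E ⊕ V) : y i ∈ Set.Icc (0:ℝ) 1 := by
  have hsub : rootPolytope A ⊆ Set.univ.pi (fun _ : E ⊕ V => Set.Icc (0:ℝ) 1) := by
    rw [rootPolytope_eq_vm]
    refine convexHull_min ?_ (convex_pi fun i _ => convex_Icc 0 1)
    rintro z ⟨p, hp, rfl⟩
    rw [Set.mem_univ_pi]
    exact fun i => vm_mem_Icc p i
  exact Set.mem_univ_pi.1 (hsub hy) i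

lemma coord_mem {E V : Type*} (A : Finset (E × V)) {s : ℝ} (hs : 0 ≤ s)
    {x : (E ⊕ V) → ℝ} (hx : x ∈ s • rootPolytope A) (i : E ⊕ V) :
    x i ∈ Set.Icc (0:ℝ) s := by
  obtain ⟨y, hy, rfl⟩ := Set.mem_smul_set.1 hx
  have h := mem_Icc_of_mem_root A hy i
  have hsy : (s • y) i = s * y i := rfl
  rw [hsy]
  exact ⟨mul_nonneg hs h.1, by
    calc s * y i ≤ s * 1 := mul_le_mul_of_nonneg_left h.2 hs
    _ = s := mul_one s⟩

lemma mem_of_rep {E V : Type*} (A : Finset (E × V)) (c : E × V → ℝ)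
    (hc : ∀ p ∈ A, 0 ≤ c p) {s : ℝ} (hsum : ∑ p ∈ A, c p = s)
    (h : A.Nonempty ∨ 0 < s) :
    ∑ p ∈ A, c p • vm p ∈ s • rootPolytope A := by
  have hs0 : 0 ≤ s := hsum ▸ Finset.sum_nonneg hc
  rcases eq_or_lt_of_le hs0 with hs | hs
  · have hA : A.Nonempty := by
      rcases h with h | h
      · exact h
      · exact absurd h (by rw [← hs]; exact lt_irrefl 0)
    have hc0 : ∀ p ∈ A, c p = 0 :=
      (Finset.sum_eq_zero_iff_of_nonneg hc).1 (by rw [hsum, ← hs])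
    have hzero : ∑ p ∈ A, c p • vm p = 0 :=
      Finset.sum_eq_zero fun p hp => by rw [hc0 p hp, zero_smul]
    obtain ⟨a, ha⟩ := hA
    have hmem : vm a ∈ rootPolytope A := subset_convexHull ℝ _ ⟨a, ha, rfl⟩
    rw [hzero, ← hs, Set.zero_smul_set ⟨_, hmem⟩]
    exact Set.mem_zero.2 rfl
  · have hmem : A.centerMass c vm ∈ convexHull ℝ (vm '' (A : Set (E × V))) :=
      Finset.centerMass_mem_convexHull A hc (by rw [hsum]; exact hs) (fun p hp => ⟨p, hp, rfl⟩)
    have hys : s • A.centerMass c vm = ∑ p ∈ A, c p • vm p := by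
      rw [Finset.centerMass, hsum, smul_smul, mul_inv_cancel₀ hs.ne', one_smul]
    rw [← hys, rootPolytope_eq_vm]
    exact Set.smul_mem_smul_set hmem

lemma rep_of_mem {E V : Type*} (A : Finset (E × V)) {s : ℝ} (hs : 0 ≤ s)
    {x : (E ⊕ V) → ℝ} (hx : x ∈ s • rootPolytope A) :
    ∃ c : E × V → ℝ, (∀ p ∈ A, 0 ≤ c p) ∧ ∑ p ∈ A, c p = s ∧ ∑ p ∈ A, c p • vm p = x := by
  obtain ⟨y, hy, rfl⟩ := Set.mem_smul_set.1 hx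
  rcases eq_or_lt_of_le hs with hs' | hs'
  · exact ⟨0, by simp, by simp [← hs'], by simp [← hs']⟩
  · rw [rootPolytope_eq_vm, ← Finset.coe_image, Finset.convexHull_eq] at hy
    obtain ⟨w, hw0, hw1, hwc⟩ := hy
    have hinj : ∀ p ∈ A, ∀ q ∈ A, vm p = vm q → p = q := fun p _ q _ h => vm_injective h
    refine ⟨fun p => s * w (vm p),
      fun p hp => mul_nonneg hs (hw0 _ (Finset.mem_image_of_mem _ hp)), ?_, ?_⟩
    · rw [← Finset.mul_sum, ← Finset.sum_image hinj, hw1, mul_one]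
    · have h2 : ∑ p ∈ A, w (vm p) • vm p = y := by
        rw [← Finset.sum_image (f := fun q => w q • q) hinj]
        rw [Finset.centerMass_eq_of_sum_1 _ id hw1] at hwc
        simpa using hwc
      calc ∑ p ∈ A, (s * w (vm p)) • vm p = s • ∑ p ∈ A, w (vm p) • vm p := by
            rw [Finset.smul_sum]
            exact Finset.sum_congr rfl fun p _ => (smul_smul s (w (vm p)) (vm p)).symm
        _ = s • y := by rw [h2]

lemma lattice_finite {ι : Type*} [Finite ι] {A : Set (ι → ℝ)} {s : ℝ}
    (hA : ∀ x ∈ A, ∀ i, x i ∈ Set.Icc (0:ℝ) s) :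
    {f ∈ A | ∀ i, ∃ z : ℤ, f i = (z:ℝ)}.Finite := by
  have hinj : Set.InjOn (fun f (i : ι) => ⌊f i⌋) {f ∈ A | ∀ i, ∃ z : ℤ, f i = (z:ℝ)} := by
    intro f hf g hg h
    funext i
    obtain ⟨zf, hzf⟩ := hf.2 i
    obtain ⟨zg, hzg⟩ := hg.2 i
    have hi : ⌊f i⌋ = ⌊g i⌋ := congrFun h i
    rw [hzf, Int.floor_intCast] at hi
    rw [hzg, Int.floor_intCast] at hi
    rw [hzf, hzg, hi]
  apply Set.Finite.of_finite_image ?_ hinj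
  apply Set.Finite.subset (Set.Finite.pi fun _ : ι => Set.finite_Icc (0:ℤ) ⌊s⌋)
  rintro _ ⟨f, hf, rfl⟩
  rw [Set.mem_univ_pi]
  intro i
  have h := hA f hf.1 i
  exact ⟨Int.floor_nonneg.2 h.1, Int.floor_le_floor h.2⟩

noncomputable def emb {E V : Type*} : ((E ⊕ V) → ℝ) →ₗ[ℝ] ((E ⊕ Option V) → ℝ) where
  toFun x i :=
    match i with
    | Sum.inl e => x (Sum.inl e)
    | Sum.inr (some v) => x (Sum.inr v)
    | Sum.inr none => 0
  map_add' x y := by funext i; rcases i with e | (_ | v) <;> simp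
  map_smul' r x := by funext i; rcases i with e | (_ | v) <;> simp

lemma emb_inl {E V : Type*} (x : (E ⊕ V) → ℝ) (e : E) : emb x (Sum.inl e) = x (Sum.inl e) := rfl
lemma emb_some {E V : Type*} (x : (E ⊕ V) → ℝ) (v : V) :
    emb x (Sum.inr (some v)) = x (Sum.inr v) := rfl
lemma emb_none {E V : Type*} (x : (E ⊕ V) → ℝ) : emb x (Sum.inr (none : Option V)) = 0 := rfl

lemma emb_vm {E V : Type*} (p : E × V) :
    emb (vm p) = vm (p.1, (some p.2 : Option V)) := by
  funext i
  rcases i with e | (_ | v)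
  · rw [emb_inl, vm_apply, vm_apply]; simp
  · rw [emb_none, vm_apply]; simp
  · rw [emb_some, vm_apply, vm_apply]; simp

lemma emb_injective {E V : Type*} : Function.Injective (emb (E := E) (V := V)) := by
  intro x y h
  funext i
  rcases i with e | v
  · exact congrFun h (Sum.inl e)
  · exact congrFun h (Sum.inr (some v))


lemma vm_none_eval {E V : Type*} (q : E × Option V) :
    vm q (Sum.inr (none : Option V)) = if q.2 = none then (1:ℝ) else 0 := by
  rcases q with ⟨e, _ | v⟩ <;> simp [vm_apply]

lemma vm_int {E V : Type*} (p : E × V) (i : E ⊕ V) : ∃ z : ℤ, vm p i = (z:ℝ) := by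
  rw [vm_apply]
  refine ⟨(if i = Sum.inl p.1 then 1 else 0) + (if i = Sum.inr p.2 then 1 else 0), ?_⟩
  split_ifs <;> norm_num

lemma main_count {E V : Type*} [Fintype E] [Fintype V] (ℰ : Finset (E × V)) (e₀ : E) (s : ℕ) :
    latticeCount (((s+1 : ℕ) : ℝ) •
        rootPolytope (ℰ.image (fun p => (p.1, (some p.2 : Option V))) ∪ {(e₀, (none : Option V))}))
      = latticeCount (((s : ℕ) : ℝ) •
            rootPolytope (ℰ.image (fun p => (p.1, (some p.2 : Option V))) ∪ {(e₀, (none : Option V))}))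
        + latticeCount (((s+1 : ℕ) : ℝ) • rootPolytope ℰ) := by
  classical
  set g : E × V → E × Option V := fun p => (p.1, (some p.2 : Option V)) with hg
  set A : Finset (E × Option V) := ℰ.image g ∪ {(e₀, (none : Option V))} with hA
  set u : (E ⊕ Option V) → ℝ := vm (e₀, (none : Option V)) with hu
  have hs0 : (0:ℝ) ≤ ((s : ℕ):ℝ) := Nat.cast_nonneg s
  have hs1 : (0:ℝ) ≤ ((s+1 : ℕ):ℝ) := Nat.cast_nonneg _
  have hs1' : (0:ℝ) < ((s+1 : ℕ):ℝ) := by exact_mod_cast Nat.succ_pos s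
  have hcast : ((s+1 : ℕ):ℝ) = ((s:ℕ):ℝ) + 1 := by push_cast; ring
  have hmemA : (e₀, (none : Option V)) ∈ A := Finset.mem_union_right _ (Finset.mem_singleton_self _)
  have hAne : A.Nonempty := ⟨_, hmemA⟩
  have hdisj : Disjoint (ℰ.image g) ({(e₀, (none : Option V))} : Finset (E × Option V)) := by
    rw [Finset.disjoint_singleton_right]
    intro hmem
    obtain ⟨p, _, hp⟩ := Finset.mem_image.1 hmem
    exact Option.some_ne_none p.2 (congrArg Prod.snd hp)
  have hginj : ∀ p ∈ ℰ, ∀ q ∈ ℰ, g p = g q → p = q := by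
    intro p _ q _ h
    have h' : (p.1, (some p.2 : Option V)) = (q.1, (some q.2 : Option V)) := h
    rw [Prod.mk.injEq] at h'
    exact Prod.ext h'.1 (Option.some_injective V h'.2)
  have eval_none : ∀ c : E × Option V → ℝ,
      (∑ p ∈ A, c p • vm p) (Sum.inr (none : Option V)) = c (e₀, (none : Option V)) := by
    intro c
    rw [Finset.sum_apply, hA, Finset.sum_union hdisj, Finset.sum_singleton]
    have h1 : ∀ q ∈ ℰ.image g, (c q • vm q) (Sum.inr (none : Option V)) = 0 := by
      intro q hq
      obtain ⟨p, _, rfl⟩ := Finset.mem_image.1 hq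
      have h2 : vm (g p) (Sum.inr (none : Option V)) = 0 := by
        rw [vm_none_eval]; simp [hg]
      simp [h2]
    rw [Finset.sum_eq_zero h1, zero_add]
    have h3 : u (Sum.inr (none : Option V)) = 1 := by
      rw [hu, vm_none_eval]; simp
    simp [← hu, h3]
  have hindsum : ∑ q ∈ A, (if q = (e₀, (none:Option V)) then (1:ℝ) else 0) = 1 := by
    rw [Finset.sum_ite_eq' A _ (fun _ => (1:ℝ))]
    simp [hmemA]
  have hindvm : ∑ q ∈ A, (if q = (e₀, (none:Option V)) then (1:ℝ) else 0) • vm q = u := by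
    have h : ∀ q ∈ A, (if q = (e₀, (none:Option V)) then (1:ℝ) else 0) • vm q
        = (if q = (e₀, (none:Option V)) then vm q else 0) := by
      intro q _; split_ifs <;> simp
    rw [Finset.sum_congr rfl h, Finset.sum_ite_eq' A _ (fun q => vm q)]
    simp [hmemA, hu]
  have hset :
      {f ∈ ((s+1:ℕ):ℝ) • rootPolytope A | ∀ i, ∃ z : ℤ, f i = (z:ℝ)} =
        ((fun x => x + u) '' {f ∈ ((s:ℕ):ℝ) • rootPolytope A | ∀ i, ∃ z : ℤ, f i = (z:ℝ)}) ∪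
          (emb '' {f ∈ ((s+1:ℕ):ℝ) • rootPolytope ℰ | ∀ i, ∃ z : ℤ, f i = (z:ℝ)}) := by
    ext x
    constructor
    · rintro ⟨hx, hlat⟩
      obtain ⟨c, hc0, hcsum, hcx⟩ := rep_of_mem A hs1 hx
      have hk : c (e₀, (none : Option V)) = x (Sum.inr none) := by rw [← hcx]; exact (eval_none c).symm
      obtain ⟨z, hz⟩ := hlat (Sum.inr none)
      have hk0 : (0:ℝ) ≤ x (Sum.inr none) := (coord_mem A hs1 hx (Sum.inr none)).1
      by_cases hzero : x (Sum.inr (none : Option V)) = 0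
      · right
        have himg : ∑ q ∈ ℰ.image g, c q • vm q = ∑ p ∈ ℰ, c (g p) • vm (g p) :=
          Finset.sum_image hginj
        have himgs : ∑ q ∈ ℰ.image g, c q = ∑ p ∈ ℰ, c (g p) := Finset.sum_image hginj
        have hcnone : c (e₀, (none : Option V)) = 0 := by rw [hk, hzero]
        have hxsplit : (∑ q ∈ ℰ.image g, c q • vm q) + c (e₀, (none:Option V)) • u = x := by
          rw [← hcx, hA, Finset.sum_union hdisj, Finset.sum_singleton, hu]
        have hxeq : ∑ p ∈ ℰ, c (g p) • vm (g p) = x := by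
          rw [← himg, ← hxsplit, hcnone, zero_smul, add_zero]
        have hsum' : ∑ p ∈ ℰ, c (g p) = ((s+1:ℕ):ℝ) := by
          have h6 := hcsum
          rw [hA, Finset.sum_union hdisj, Finset.sum_singleton, himgs, hcnone, add_zero] at h6
          exact h6
        have hemb : emb (∑ p ∈ ℰ, c (g p) • vm p) = x := by
          rw [map_sum, ← hxeq]
          refine Finset.sum_congr rfl fun p hp => ?_
          rw [map_smul, emb_vm]
        refine ⟨∑ p ∈ ℰ, c (g p) • vm p, ⟨?_, ?_⟩, hemb⟩
        · exact mem_of_rep ℰ (fun p => c (g p))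
            (fun p hp => hc0 _ (Finset.mem_union_left _ (Finset.mem_image_of_mem g hp)))
            hsum' (Or.inr hs1')
        · intro i
          rcases i with e | v
          · obtain ⟨z', hz'⟩ := hlat (Sum.inl e)
            have h5 : (∑ p ∈ ℰ, c (g p) • vm p) (Sum.inl e) = x (Sum.inl e) :=
              ((emb_inl _ e).symm).trans (congrFun hemb (Sum.inl e))
            exact ⟨z', h5.trans hz'⟩
          · obtain ⟨z', hz'⟩ := hlat (Sum.inr (some v))
            have h5 : (∑ p ∈ ℰ, c (g p) • vm p) (Sum.inr v) = x (Sum.inr (some v)) :=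
              ((emb_some _ v).symm).trans (congrFun hemb (Sum.inr (some v)))
            exact ⟨z', h5.trans hz'⟩
      · left
        have hz0 : (0:ℤ) ≤ z := by
          have h7 : ((0:ℤ):ℝ) ≤ (z:ℝ) := by rw [← hz]; exact_mod_cast hk0
          exact_mod_cast h7
        have hzne : z ≠ 0 := by
          rintro rfl
          exact hzero (by rw [hz]; norm_num)
        have hz1 : (1:ℝ) ≤ x (Sum.inr none) := by
          rw [hz]; exact_mod_cast (by omega : (1:ℤ) ≤ z)
        set c' : E × Option V → ℝ :=
          fun q => if q = (e₀, (none:Option V)) then c q - 1 else c q with hc'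
        have hc'eq : ∀ q, c' q = c q - (if q = (e₀, (none:Option V)) then (1:ℝ) else 0) := by
          intro q; rw [hc']; dsimp only; split_ifs <;> ring
        have hc'0 : ∀ q ∈ A, 0 ≤ c' q := by
          intro q hq
          rw [hc']
          dsimp only
          split_ifs with hqe
          · rw [hqe, hk]; linarith
          · exact hc0 q hq
        have hc'sum : ∑ q ∈ A, c' q = ((s:ℕ):ℝ) := by
          simp_rw [hc'eq]
          rw [Finset.sum_sub_distrib, hcsum, hindsum, hcast]; ring
        have hc'x : ∑ q ∈ A, c' q • vm q = x - u := by
          simp_rw [hc'eq, sub_smul]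
          rw [Finset.sum_sub_distrib, hcx, hindvm]
        have hmem2 : x - u ∈ ((s:ℕ):ℝ) • rootPolytope A := by
          rw [← hc'x]; exact mem_of_rep A c' hc'0 hc'sum (Or.inl hAne)
        have hlat2 : ∀ i, ∃ z : ℤ, (x - u) i = (z:ℝ) := by
          intro i
          obtain ⟨zx, hzx⟩ := hlat i
          obtain ⟨zu, hzu⟩ := vm_int (e₀, (none:Option V)) i
          exact ⟨zx - zu, by rw [Pi.sub_apply, hzx, hu, hzu]; push_cast; ring⟩
        exact ⟨x - u, ⟨hmem2, hlat2⟩, by simp⟩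
    · rintro (⟨y, ⟨hy, hylat⟩, rfl⟩ | ⟨y, ⟨hy, hylat⟩, rfl⟩)
      · obtain ⟨c, hc0, hcsum, hcy⟩ := rep_of_mem A hs0 hy
        set c' : E × Option V → ℝ :=
          fun q => c q + (if q = (e₀,(none:Option V)) then 1 else 0) with hc'
        have hc'0 : ∀ q ∈ A, 0 ≤ c' q := by
          intro q hq
          have h8 := hc0 q hq
          rw [hc']; dsimp only; split_ifs <;> linarith
        have hc'sum : ∑ q ∈ A, c' q = ((s+1:ℕ):ℝ) := by
          rw [hc']
          rw [Finset.sum_add_distrib, hcsum, hindsum, hcast]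
        have hc'y : ∑ q ∈ A, c' q • vm q = y + u := by
          simp_rw [hc', add_smul]
          rw [Finset.sum_add_distrib, hcy, hindvm]
        have hbeta : (fun x => x + u) y = y + u := rfl
        rw [hbeta]
        refine ⟨by rw [← hc'y]; exact mem_of_rep A c' hc'0 hc'sum (Or.inl hAne), ?_⟩
        intro i
        obtain ⟨zy, hzy⟩ := hylat i
        obtain ⟨zu, hzu⟩ := vm_int (e₀,(none:Option V)) i
        exact ⟨zy + zu, by rw [Pi.add_apply, hzy, hu, hzu]; push_cast; ring⟩
      · obtain ⟨c, hc0, hcsum, hcy⟩ := rep_of_mem ℰ hs1 hy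
        set c' : E × Option V → ℝ := fun q => Option.rec 0 (fun v => c (q.1, v)) q.2 with hc'
        have hcg : ∀ p : E × V, c' (g p) = c p := by intro p; simp [hc', hg]
        have hcnone : c' (e₀, (none:Option V)) = 0 := by rw [hc']
        have hc'0 : ∀ q ∈ A, 0 ≤ c' q := by
          intro q hq
          rw [hA, Finset.mem_union] at hq
          rcases hq with hq | hq
          · obtain ⟨p, hp, rfl⟩ := Finset.mem_image.1 hq
            rw [hcg]; exact hc0 p hp
          · rw [Finset.mem_singleton] at hq
            rw [hq, hcnone]
        have hc'sum : ∑ q ∈ A, c' q = ((s+1:ℕ):ℝ) := by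
          rw [hA, Finset.sum_union hdisj, Finset.sum_singleton, hcnone, add_zero,
            Finset.sum_image hginj]
          simp_rw [hcg]
          exact hcsum
        have hc'y : ∑ q ∈ A, c' q • vm q = emb y := by
          rw [hA, Finset.sum_union hdisj, Finset.sum_singleton, hcnone, zero_smul, add_zero,
            Finset.sum_image hginj]
          rw [← hcy, map_sum]
          refine Finset.sum_congr rfl fun p hp => ?_
          rw [hcg, map_smul, emb_vm]
        refine ⟨by rw [← hc'y]; exact mem_of_rep A c' hc'0 hc'sum (Or.inr hs1'), ?_⟩
        intro i
        rcases i with e | (_ | v)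
        · obtain ⟨zy, hzy⟩ := hylat (Sum.inl e); exact ⟨zy, by rw [emb_inl]; exact hzy⟩
        · exact ⟨0, by rw [emb_none]; norm_num⟩
        · obtain ⟨zy, hzy⟩ := hylat (Sum.inr v); exact ⟨zy, by rw [emb_some]; exact hzy⟩
  have hfin2 : {f ∈ ((s:ℕ):ℝ) • rootPolytope A | ∀ i, ∃ z : ℤ, f i = (z:ℝ)}.Finite :=
    lattice_finite (fun x hx i => coord_mem A hs0 hx i)
  have hfin3 : {f ∈ ((s+1:ℕ):ℝ) • rootPolytope ℰ | ∀ i, ∃ z : ℤ, f i = (z:ℝ)}.Finite :=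
    lattice_finite (fun x hx i => coord_mem ℰ hs1 hx i)
  have hdisj2 : Disjoint
      ((fun x => x + u) '' {f ∈ ((s:ℕ):ℝ) • rootPolytope A | ∀ i, ∃ z : ℤ, f i = (z:ℝ)})
      (emb '' {f ∈ ((s+1:ℕ):ℝ) • rootPolytope ℰ | ∀ i, ∃ z : ℤ, f i = (z:ℝ)}) := by
    rw [Set.disjoint_left]
    rintro a ⟨y, ⟨hy, _⟩, rfl⟩ ⟨w, ⟨hw, _⟩, hwa⟩
    have h1 : (0:ℝ) ≤ y (Sum.inr (none:Option V)) := (coord_mem A hs0 hy _).1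
    have h3 : u (Sum.inr (none:Option V)) = 1 := by rw [hu, vm_none_eval]; simp
    have h4 : y (Sum.inr (none:Option V)) + u (Sum.inr (none:Option V)) = (0:ℝ) :=
      (congrFun hwa (Sum.inr (none:Option V))).symm
    rw [h3] at h4
    linarith
  simp only [latticeCount]
  rw [hset, Set.ncard_union_eq hdisj2 (hfin2.image _) (hfin3.image _),
      Set.ncard_image_of_injective _ (add_left_injective u),
      Set.ncard_image_of_injective _ emb_injective]


lemma count_zero {E V : Type*} (A : Finset (E × V)) (hA : A.Nonempty) :
    latticeCount (((0:ℕ):ℝ) • rootPolytope A) = 1 := by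
  obtain ⟨a, ha⟩ := hA
  have hmem : vm a ∈ rootPolytope A := subset_convexHull ℝ _ ⟨a, ha, rfl⟩
  have h0 : ((0:ℕ):ℝ) • rootPolytope A = {0} := by
    rw [Nat.cast_zero, Set.zero_smul_set ⟨_, hmem⟩]
    ext f; simp [Set.mem_zero]
  rw [latticeCount, h0]
  have hsep : {f ∈ ({0} : Set ((E ⊕ V) → ℝ)) | ∀ i, ∃ z : ℤ, f i = (z:ℝ)} = {0} := by
    ext f
    constructor
    · rintro ⟨hf, _⟩; exact hf
    · intro hf
      rw [Set.mem_singleton_iff] at hf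
      subst hf
      exact ⟨rfl, fun i => ⟨0, by simp⟩⟩
  rw [hsep, Set.ncard_singleton]

end PendantAux

/-- Adding a pendant vertex.  Let `G` be a connected bipartite graph with color classes
`E`, `V` and edge set `ℰ`, and let `G̃` be obtained by adding one new vertex (`none` in the
class `Option V`) joined by a single edge to an existing vertex `e₀ ∈ E` of the opposite
class.  Then `Ehr_{Q_{G̃}}(x) = Ehr_{Q_G}(x)/(1-x)`, and consequently the interior
polynomials `I_H(x) = (1-x)^{(#vertices of H) - 1} Ehr_{Q_H}(x)` of `G̃` and `G` agree. -/
theorem pendant_vertex_interior {E V : Type*} [Fintype E] [Fintype V]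
    (ℰ : Finset (E × V)) (hconn : (bipGraph ℰ).Connected) (e₀ : E) :
    (1 - PowerSeries.X) *
        ehr (ℰ.image (fun p => (p.1, (some p.2 : Option V))) ∪ {(e₀, (none : Option V))}) =
      ehr ℰ ∧
    (1 - PowerSeries.X) ^ (Fintype.card E + Fintype.card (Option V) - 1) *
        ehr (ℰ.image (fun p => (p.1, (some p.2 : Option V))) ∪ {(e₀, (none : Option V))}) =
      (1 - PowerSeries.X) ^ (Fintype.card E + Fintype.card V - 1) * ehr ℰ := by
  classical
  have hAne : (ℰ.image (fun p => (p.1, (some p.2 : Option V))) ∪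
      {(e₀, (none : Option V))}).Nonempty :=
    ⟨_, Finset.mem_union_right _ (Finset.mem_singleton_self _)⟩
  have key : (1 - PowerSeries.X) *
      ehr (ℰ.image (fun p => (p.1, (some p.2 : Option V))) ∪ {(e₀, (none : Option V))}) =
      ehr ℰ := by
    rw [sub_mul, one_mul]
    ext n
    rw [map_sub]
    cases n with
    | zero =>
        have h1 : (PowerSeries.coeff (R := ℝ) 0) (PowerSeries.X *
            ehr (ℰ.image (fun p => (p.1, (some p.2 : Option V))) ∪
              {(e₀, (none : Option V))})) = 0 := by
          rw [PowerSeries.coeff_zero_eq_constantCoeff, map_mul, PowerSeries.constantCoeff_X,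
            zero_mul]
        rw [h1, sub_zero]
        simp [ehr]
    | succ n =>
        rw [PowerSeries.coeff_succ_X_mul]
        simp only [ehr, PowerSeries.coeff_mk]
        rw [if_neg (Nat.succ_ne_zero n), if_neg (Nat.succ_ne_zero n)]
        have hmc := PendantAux.main_count ℰ e₀ n
        by_cases hn : n = 0
        · subst hn
          rw [if_pos rfl, hmc, PendantAux.count_zero _ hAne]
          push_cast
          ring
        · rw [if_neg hn, hmc]
          push_cast
          ring
  refine ⟨key, ?_⟩
  have hE1 : 1 ≤ Fintype.card E := Fintype.card_pos_iff.2 ⟨e₀⟩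
  rw [Fintype.card_option]
  have hexp : Fintype.card E + (Fintype.card V + 1) - 1 =
      (Fintype.card E + Fintype.card V - 1) + 1 := by omega
  rw [hexp, pow_succ, mul_assoc, key]
end
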